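/- Let d ≥ 1 and k, q, β ∈ ℕ. Let x ∈ ℝ^{4^d} with x ≠ 0 and every component a k-bit floating-point number (i.e., x_i = σ_i·m_i·2^{t_i} with σ_i ∈ {1,−1}, m_i ∈ ℕ, m_i < 2^k, t_i ∈ ℤ). Let e_max = ⌊log₂‖x‖_∞⌋ and ℓ = e_max − q + 1. Define: (Step 2) z ∈ ℤ^{4^d} by z_i = sgn(x_i)·⌊2^{−ℓ}·|x_i|⌋; (Step 3) w = 𝐿̃_d(z) ∈ ℤ^{4^d}; (Step 8) ŵ_i = ∑_{j > q+1−β} d_i(j)·(−2)^j, where d_i is the negabinary digit function of w_i. Then ‖ŵ − L_d·(2^{−ℓ}·x)‖_∞ ≤ 2^{−ℓ}·( (8/3)·ε_β + ε_q·(1 + (8/3)·ε_β)·(k_L·(1+ε_q) + 1) )·‖x‖_∞, where ε_m = 2^{1−m} and k_L = (7/4)·(2^d − 1). -/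

import Mathlib

/-!
The error splits into the three lossy steps. Truncating `2^{-ℓ} x` to integers costs at most `1`
per entry, and `L_d` does not amplify it, since every row of `L` has `ℓ¹`-norm at most `1` and `L_d`
is the composition of `L` applied along each dimension. Each one-dimensional pass of `𝐿̃` differs
from `L` by at most `7/4` (six roundings `r`), and the later exact passes again do not amplify, so
Step 3 costs at most `7/4 · d`. Dropping the negabinary digits of index `≤ m` costs at most
`2^{m+2}/3`, by an induction on the number of digits. Finally `‖x‖ ≥ 2^{e_max}` gives
`2^{-ℓ} ‖x‖ ≥ 2^{q-1}`, which absorbs all three terms into the stated bound (`7/4 · d ≤ k_L`).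
-/

/-- Floor division by 2, modeling a one-bit right shift of a two's complement integer. -/
def rr (p : ℤ) : ℤ := ⌊(p : ℚ) / 2⌋

/-- The ZFP forward transform matrix `L`. -/
noncomputable def Lmat : Matrix (Fin 4) (Fin 4) ℝ :=
  (1 / 16 : ℝ) • !![4, 4, 4, 4; 5, 1, -1, -5; -4, 4, 4, -4; -2, 6, -6, 2]

/-- The lossy forward transform `𝐿̃ : ℤ⁴ → ℤ⁴` of ZFP, executed step by step. -/
def Ltilde (a : Fin 4 → ℤ) : Fin 4 → ℤ :=
  let a1 := a 0
  let a2 := a 1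
  let a3 := a 2
  let a4 := a 3
  let a1 := a1 + a4
  let a1 := rr a1
  let a4 := a4 - a1
  let a3 := a3 + a2
  let a3 := rr a3
  let a2 := a2 - a3
  let a1 := a1 + a3
  let a1 := rr a1
  let a3 := a3 - a1
  let a4 := a4 + a2
  let a4 := rr a4
  let a2 := a2 - a4
  let a4 := a4 + rr a2
  let a2 := a2 - rr a4
  ![a1, a2, a3, a4]

/-- The `d`-fold Kronecker power `L_d = L ⊗ ⋯ ⊗ L`, indexed by tuples in `{0,1,2,3}^d`. -/
noncomputable def LmatD (d : ℕ) : Matrix (Fin d → Fin 4) (Fin d → Fin 4) ℝ :=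
  fun v w => ∏ j, Lmat (v j) (w j)

/-- Applying `𝐿̃` along dimension `j`. -/
def applyAlong {d : ℕ} (j : Fin d) (z : (Fin d → Fin 4) → ℤ) : (Fin d → Fin 4) → ℤ :=
  fun v => Ltilde (fun t => z (Function.update v j t)) (v j)

/-- The lossy `d`-dimensional forward transform `𝐿̃_d`: apply `𝐿̃` along dimension 1,
then dimension 2, …, then dimension `d`. -/
def LtildeD {d : ℕ} (z : (Fin d → Fin 4) → ℤ) : (Fin d → Fin 4) → ℤ :=
  (List.finRange d).foldl (fun acc j => applyAlong j acc) z

open Matrix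

lemma rr_bounds (p : ℤ) : (p : ℝ) - 1 ≤ 2 * rr p ∧ 2 * (rr p : ℝ) ≤ p := by
  have h : rr p = p / 2 := by simpa [rr] using Rat.floor_intCast_div_natCast p 2
  constructor <;> norm_cast <;> omega

lemma abs_Ltilde_sub_mulVec_le (a : Fin 4 → ℤ) (i : Fin 4) :
    |(Ltilde a i : ℝ) - (Lmat *ᵥ fun t => (a t : ℝ)) i| ≤ 7 / 4 := by
  -- one bound for each of the six roundings performed by `Ltilde`
  have h₁ := rr_bounds (a 0 + a 3)
  have h₂ := rr_bounds (a 2 + a 1)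
  have h₃ := rr_bounds (rr (a 0 + a 3) + rr (a 2 + a 1))
  have h₄ := rr_bounds (a 3 - rr (a 0 + a 3) + (a 1 - rr (a 2 + a 1)))
  have h₅ := rr_bounds (a 1 - rr (a 2 + a 1) - rr (a 3 - rr (a 0 + a 3) + (a 1 - rr (a 2 + a 1))))
  have h₆ := rr_bounds (rr (a 3 - rr (a 0 + a 3) + (a 1 - rr (a 2 + a 1))) +
    rr (a 1 - rr (a 2 + a 1) - rr (a 3 - rr (a 0 + a 3) + (a 1 - rr (a 2 + a 1)))))
  push_cast at h₁ h₂ h₃ h₄ h₅ h₆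
  fin_cases i <;>
    simp [Ltilde, Matrix.mulVec, dotProduct, Lmat, Fin.sum_univ_four] <;>
    rw [abs_le] <;> constructor <;> linarith

lemma sum_abs_Lmat_le_one (s : Fin 4) : ∑ t, |Lmat s t| ≤ 1 := by
  fin_cases s <;> simp [Lmat, Fin.sum_univ_four, abs_of_nonneg, abs_of_nonpos] <;> norm_num

lemma zpow_floor_logb_le {x : ℝ} (hx : 0 < x) : (2 : ℝ) ^ ⌊Real.logb 2 x⌋ ≤ x := by
  have := Real.floor_logb_natCast (b := 2) hx.le
  push_cast at this
  rw [this]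
  exact_mod_cast Int.zpow_log_le_self (by norm_num) hx

lemma abs_sign_mul_floor_abs_sub_le (s a : ℝ) :
    |(((if 0 ≤ a then 1 else -1) * ⌊s * |a|⌋ : ℤ) : ℝ) - s * a| ≤ 1 := by
  rcases le_or_gt 0 a with ha | ha
  · have h := Int.floor_le (s * a)
    have h' := Int.lt_floor_add_one (s * a)
    simp only [ha, if_true, abs_of_nonneg ha]
    push_cast
    rw [abs_le]; constructor <;> linarith
  · have h := Int.floor_le (s * -a)
    have h' := Int.lt_floor_add_one (s * -a)
    simp only [not_le.2 ha, if_false, abs_of_neg ha]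
    push_cast
    rw [abs_le]; constructor <;> linarith

section Separable

variable {R ι : Type*} [CommSemiring R] {d : ℕ}

def kronPi (A : Fin d → Matrix ι ι R) : Matrix (Fin d → ι) (Fin d → ι) R :=
  fun v w => ∏ i, A i (v i) (w i)

lemma prod_apply_update_eq_mul_prod (A : Fin d → Matrix ι ι R) (v w : Fin d → ι) (j : Fin d)
    (s : ι) : ∏ i, A i (v i) (Function.update w j s i) =
      A j (v j) s * ∏ i ∈ Finset.univ \ {j}, A i (v i) (w i) := by
  simp only [Function.apply_update (fun i => A i (v i))]
  exact Finset.prod_update_of_mem (Finset.mem_univ j) _ _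

lemma kronPi_update_apply (A : Fin d → Matrix ι ι R) (j : Fin d) (N : Matrix ι ι R)
    (v w : Fin d → ι) : kronPi (Function.update A j N) v w =
      N (v j) (w j) * ∏ i ∈ Finset.univ \ {j}, A i (v i) (w i) := by
  simp only [kronPi, Function.apply_update (fun i (B : Matrix ι ι R) => B (v i) (w i))]
  exact Finset.prod_update_of_mem (Finset.mem_univ j) _ _

lemma kronPi_one [DecidableEq ι] : kronPi (fun _ : Fin d => (1 : Matrix ι ι R)) = 1 := by
  ext v w
  simp [kronPi, one_apply, Fintype.prod_boole, funext_iff]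

variable [Fintype ι]

def mulAlong (M : Matrix ι ι R) (j : Fin d) (f : (Fin d → ι) → R) : (Fin d → ι) → R :=
  fun v => ∑ t, M (v j) t * f (Function.update v j t)

lemma kronPi_mulVec_mulAlong (A : Fin d → Matrix ι ι R) (M : Matrix ι ι R) (j : Fin d)
    (f : (Fin d → ι) → R) :
    kronPi A *ᵥ mulAlong M j f = kronPi (Function.update A j (A j * M)) *ᵥ f := by
  funext v
  let σ : Equiv.Perm ((Fin d → ι) × ι) :=
    { toFun p := (Function.update p.1 j p.2, p.1 j)
      invFun p := (Function.update p.1 j p.2, p.1 j)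
      left_inv p := by simp
      right_inv p := by simp }
  calc (kronPi A *ᵥ mulAlong M j f) v
      = ∑ p : (Fin d → ι) × ι,
          kronPi A v p.1 * (M (p.1 j) p.2 * f (Function.update p.1 j p.2)) := by
        simp only [mulVec, dotProduct, mulAlong, Finset.mul_sum, Fintype.sum_prod_type]
    _ = ∑ p : (Fin d → ι) × ι, kronPi A v (Function.update p.1 j p.2) * (M p.2 (p.1 j) * f p.1) :=
        Fintype.sum_equiv σ _ _ fun p => by simp [σ]
    _ = ∑ w, (∑ t, kronPi A v (Function.update w j t) * M t (w j)) * f w := by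
        simp only [Fintype.sum_prod_type, Finset.sum_mul, mul_assoc]
    _ = (kronPi (Function.update A j (A j * M)) *ᵥ f) v := by
        refine Finset.sum_congr rfl fun w _ => ?_
        simp only [kronPi_update_apply, mul_apply]
        simp only [kronPi, prod_apply_update_eq_mul_prod, Finset.sum_mul]
        refine Finset.sum_congr rfl fun t _ => ?_
        ring

lemma foldl_mulAlong [DecidableEq ι] (M : Matrix ι ι R) (l : List (Fin d)) (f : (Fin d → ι) → R) :
    l.foldl (fun g j => mulAlong M j g) f = kronPi (fun i => M ^ l.count i) *ᵥ f := by
  induction l generalizing f with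
  | nil => simp [kronPi_one]
  | cons j l ih =>
    rw [List.foldl_cons, ih, kronPi_mulVec_mulAlong]
    congr 2
    funext i
    by_cases hij : i = j
    · subst hij; simp [pow_succ]
    · simp [hij, Ne.symm hij]

lemma foldl_finRange_mulAlong [DecidableEq ι] (M : Matrix ι ι R) (f : (Fin d → ι) → R) :
    (List.finRange d).foldl (fun g j => mulAlong M j g) f = kronPi (fun _ => M) *ᵥ f := by
  rw [foldl_mulAlong]
  congr 2
  funext i
  rw [List.count_eq_one_of_mem (List.nodup_finRange d) (List.mem_finRange i), pow_one]

end Separable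

lemma abs_mulAlong_sub_le {ι : Type*} [Fintype ι] {d : ℕ} {M : Matrix ι ι ℝ}
    (hM : ∀ s, ∑ t, |M s t| ≤ 1) (j : Fin d) {f g : (Fin d → ι) → ℝ} {c : ℝ} (h : ∀ v, |f v - g v| ≤ c) (v : Fin d → ι) :
    |mulAlong M j f v - mulAlong M j g v| ≤ c := by
  have hc : 0 ≤ c := (abs_nonneg _).trans (h v)
  calc |mulAlong M j f v - mulAlong M j g v|
      = |∑ t, M (v j) t * (f (Function.update v j t) - g (Function.update v j t))| := by
        simp only [mulAlong, mul_sub, Finset.sum_sub_distrib]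
    _ ≤ ∑ t, |M (v j) t| * c := by
        refine (Finset.abs_sum_le_sum_abs _ _).trans (Finset.sum_le_sum fun t _ => ?_)
        rw [abs_mul]
        exact mul_le_mul_of_nonneg_left (h _) (abs_nonneg _)
    _ ≤ c := by
        rw [← Finset.sum_mul]
        exact mul_le_of_le_one_left hc (hM _)

lemma abs_applyAlong_sub_mulAlong_le {d : ℕ} (j : Fin d) (z : (Fin d → Fin 4) → ℤ)
    (v : Fin d → Fin 4) :
    |(applyAlong j z v : ℝ) - mulAlong Lmat j (fun u => (z u : ℝ)) v| ≤ 7 / 4 :=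
  abs_Ltilde_sub_mulVec_le _ _

lemma abs_foldl_applyAlong_sub_le {d : ℕ} (l : List (Fin d)) {z : (Fin d → Fin 4) → ℤ}
    {y : (Fin d → Fin 4) → ℝ} {c : ℝ} (h : ∀ v, |(z v : ℝ) - y v| ≤ c) (v : Fin d → Fin 4) :
    |(l.foldl (fun acc j => applyAlong j acc) z v : ℝ) -
        l.foldl (fun g j => mulAlong Lmat j g) y v| ≤ 7 / 4 * l.length + c := by
  induction l generalizing z y c with
  | nil => simpa using h v
  | cons j l ih =>
    have step : ∀ u, |(applyAlong j z u : ℝ) - mulAlong Lmat j y u| ≤ 7 / 4 + c := fun u =>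
      (abs_sub_le _ (mulAlong Lmat j (fun u => (z u : ℝ)) u) _).trans
        (add_le_add (abs_applyAlong_sub_mulAlong_le j z u)
          (abs_mulAlong_sub_le sum_abs_Lmat_le_one j h u))
    refine (ih step).trans (le_of_eq ?_)
    simp only [List.length_cons, Nat.cast_succ]
    ring

lemma abs_LtildeD_sub_mulVec_le {d : ℕ} {z : (Fin d → Fin 4) → ℤ} {y : (Fin d → Fin 4) → ℝ}
    {c : ℝ} (h : ∀ v, |(z v : ℝ) - y v| ≤ c) (v : Fin d → Fin 4) :
    |(LtildeD z v : ℝ) - (LmatD d *ᵥ y) v| ≤ 7 / 4 * d + c := by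
  have h' := abs_foldl_applyAlong_sub_le (List.finRange d) h v
  rwa [foldl_finRange_mulAlong, List.length_finRange] at h'

-- With the sign `(-1)^n` the invariant has the same shape for every `n`: appending the digit
-- of weight `(-2)^n` negates the normalized sum and shifts it by `0` or `-2^n`.
lemma negabinary_partial_sum_bounds {g : ℕ → ℤ} (hg : ∀ j, g j = 0 ∨ g j = 1) (n : ℕ) :
    -2 ^ (n + 1) ≤ 3 * ((-1) ^ n * ∑ j ∈ Finset.range n, g j * (-2) ^ j) ∧
      3 * ((-1) ^ n * ∑ j ∈ Finset.range n, g j * (-2) ^ j) ≤ 2 ^ n := by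
  induction n with
  | zero => simp
  | succ n ih =>
    set s := ∑ j ∈ Finset.range n, g j * (-2) ^ j
    have hsign : (-1 : ℤ) ^ n * (-2) ^ n = 2 ^ n := by rw [← mul_pow]; norm_num
    have hstep : (-1) ^ (n + 1) * (s + g n * (-2) ^ n) = -((-1) ^ n * s) - g n * 2 ^ n := by
      linear_combination (-g n) * hsign
    rw [Finset.sum_range_succ, hstep]
    have h2n : (0 : ℤ) ≤ 2 ^ n := by positivity
    rcases hg n with h | h <;> rw [h] <;> constructor <;>
      linarith [ih.1, ih.2, pow_succ (2 : ℤ) n, pow_succ (2 : ℤ) (n + 1)]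

lemma three_mul_abs_negabinary_sum_le {g : ℕ → ℤ} (hg : ∀ j, g j = 0 ∨ g j = 1) (n : ℕ) :
    3 * |∑ j ∈ Finset.range n, g j * (-2) ^ j| ≤ 2 ^ (n + 1) := by
  obtain ⟨hlo, hhi⟩ := negabinary_partial_sum_bounds hg n
  calc 3 * |∑ j ∈ Finset.range n, g j * (-2) ^ j|
      = |3 * ((-1) ^ n * ∑ j ∈ Finset.range n, g j * (-2) ^ j)| := by simp [abs_mul]
    _ ≤ 2 ^ (n + 1) := abs_le.2 ⟨hlo, hhi.trans (pow_le_pow_right₀ (by norm_num) n.le_succ)⟩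

lemma three_mul_abs_sum_sub_sum_filter_le (D : ℕ →₀ ℤ) (hD : ∀ j, D j = 0 ∨ D j = 1) (m : ℤ) :
    3 * |((∑ j ∈ D.support, D j * (-2) ^ j : ℤ) : ℝ) -
        ((∑ j ∈ D.support.filter (fun j : ℕ => m < j), D j * (-2) ^ j : ℤ) : ℝ)| ≤
      (2 : ℝ) ^ (m + 2) := by
  have hlow : ∑ j ∈ D.support, D j * (-2) ^ j -
      ∑ j ∈ D.support.filter (fun j : ℕ => m < j), D j * (-2) ^ j =
      ∑ j ∈ Finset.range (m + 1).toNat, D j * (-2) ^ j := by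
    rw [← Finset.sum_filter_not_add_sum_filter D.support (fun j : ℕ => m < j), add_sub_cancel_right]
    refine Finset.sum_subset (fun j hj => ?_) (fun j hjn hj => ?_)
    · simp only [Finset.mem_filter, Finset.mem_range] at hj ⊢
      omega
    · simp only [Finset.mem_filter, Finset.mem_range, Finsupp.mem_support_iff, not_and,
        not_lt] at hjn hj
      have hDj : D j = 0 := by_contra fun h => hj h (by omega)
      simp [hDj]
  rw [← Int.cast_sub, hlow]
  rcases le_or_gt (m + 1) 0 with hm | hm
  · simp [Int.toNat_eq_zero.2 hm]
    positivity
  · have h := three_mul_abs_negabinary_sum_le hD (m + 1).toNat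
    have hpow : (2 : ℝ) ^ ((m + 1).toNat + 1) = 2 ^ (m + 2) := by
      rw [← zpow_natCast]; congr 1; omega
    rw [← hpow]
    exact_mod_cast h

lemma zfp_error_budget (d q β : ℕ) {c : ℝ} (hc : (2 : ℝ) ^ ((q : ℤ) - 1) ≤ c) :
    (2 : ℝ) ^ ((q : ℤ) + 1 - β + 2) / 3 + (7 / 4 * d + 1) ≤
      ((8 / 3) * 2 ^ (1 - (β : ℤ)) +
        2 ^ (1 - (q : ℤ)) * (1 + (8 / 3) * 2 ^ (1 - (β : ℤ))) *
          ((7 / 4) * ((2 : ℝ) ^ d - 1) * (1 + 2 ^ (1 - (q : ℤ))) + 1)) * c := by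
  set a : ℝ := (8 / 3) * 2 ^ (1 - (β : ℤ))
  set b : ℝ := 2 ^ (1 - (q : ℤ))
  set K : ℝ := (7 / 4) * ((2 : ℝ) ^ d - 1)
  have ha : (2 : ℝ) ^ ((q : ℤ) + 1 - β + 2) / 3 = a * 2 ^ ((q : ℤ) - 1) := by
    rw [show (q : ℤ) + 1 - β + 2 = (1 - β) + (q - 1) + 3 by ring, zpow_add₀ two_ne_zero,
      zpow_add₀ two_ne_zero]
    ring
  have hb : 1 ≤ b * c := by
    calc (1 : ℝ) = b * 2 ^ ((q : ℤ) - 1) := by rw [← zpow_add₀ two_ne_zero]; norm_num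
      _ ≤ b * c := by gcongr
  have hK : 7 / 4 * (d : ℝ) ≤ K := by
    have : (d : ℝ) + 1 ≤ 2 ^ d := by exact_mod_cast Nat.lt_two_pow_self
    simp only [K]
    linarith
  have hX : 7 / 4 * (d : ℝ) + 1 ≤ K * (1 + b) + 1 := by
    have : 0 ≤ K * b := mul_nonneg (le_trans (by positivity) hK) (by positivity)
    linarith
  calc (2 : ℝ) ^ ((q : ℤ) + 1 - β + 2) / 3 + (7 / 4 * d + 1)
      ≤ a * c + 1 * (K * (1 + b) + 1) * 1 := by
        rw [ha, one_mul, mul_one]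
        gcongr
    _ ≤ a * c + (1 + a) * (K * (1 + b) + 1) * (b * c) := by
        have : 0 ≤ K * (1 + b) + 1 := le_trans (by positivity) hX
        gcongr
        exact le_add_of_nonneg_right (by positivity)
    _ = (a + b * (1 + a) * (K * (1 + b) + 1)) * c := by ring

theorem zfp_compression_error_general (d q β : ℕ)
    (x : (Fin d → Fin 4) → ℝ) (hx : x ≠ 0)
    (emax ℓ : ℤ) (hemax : emax = ⌊Real.logb 2 ‖x‖⌋) (hℓ : ℓ = emax - (q : ℤ) + 1)
    (z : (Fin d → Fin 4) → ℤ)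
    (hz : ∀ v, z v = (if 0 ≤ x v then 1 else -1) * ⌊(2 : ℝ) ^ (-ℓ) * |x v|⌋)
    (w : (Fin d → Fin 4) → ℤ) (hw : w = LtildeD z)
    (D : (Fin d → Fin 4) → (ℕ →₀ ℤ))
    (hD01 : ∀ v j, D v j = 0 ∨ D v j = 1)
    (hDrep : ∀ v, w v = ∑ j ∈ (D v).support, D v j * (-2 : ℤ) ^ j)
    (what : (Fin d → Fin 4) → ℤ)
    (hwhat : ∀ v, what v =
      ∑ j ∈ (D v).support.filter (fun j : ℕ => (q : ℤ) + 1 - (β : ℤ) < (j : ℤ)),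
        D v j * (-2 : ℤ) ^ j) :
    ‖(fun v => (what v : ℝ)) - (LmatD d).mulVec (fun v => (2 : ℝ) ^ (-ℓ) * x v)‖ ≤
      2 ^ (-ℓ) * ((8 / 3) * 2 ^ (1 - (β : ℤ)) +
        2 ^ (1 - (q : ℤ)) * (1 + (8 / 3) * 2 ^ (1 - (β : ℤ))) *
          ((7 / 4) * ((2 : ℝ) ^ d - 1) * (1 + 2 ^ (1 - (q : ℤ))) + 1)) * ‖x‖ := by
  have hscale : (2 : ℝ) ^ ((q : ℤ) - 1) ≤ 2 ^ (-ℓ) * ‖x‖ :=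
    calc (2 : ℝ) ^ ((q : ℤ) - 1) = 2 ^ (-ℓ) * 2 ^ emax := by
          rw [← zpow_add₀ two_ne_zero]; congr 1; omega
      _ ≤ 2 ^ (-ℓ) * ‖x‖ := by
          rw [hemax]; gcongr; exact zpow_floor_logb_le (norm_pos_iff.2 hx)
  have hround : ∀ v, |(z v : ℝ) - 2 ^ (-ℓ) * x v| ≤ 1 := fun v => by
    rw [hz v]; exact abs_sign_mul_floor_abs_sub_le _ _
  have htransform : ∀ v, |(w v : ℝ) - (LmatD d *ᵥ fun u => 2 ^ (-ℓ) * x u) v| ≤ 7 / 4 * d + 1 :=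
    hw ▸ abs_LtildeD_sub_mulVec_le hround
  have htrunc : ∀ v, 3 * |(what v : ℝ) - w v| ≤ 2 ^ ((q : ℤ) + 1 - β + 2) := fun v => by
    rw [hwhat v, hDrep v, abs_sub_comm]
    exact three_mul_abs_sum_sub_sum_filter_le (D v) (hD01 v) _
  refine (pi_norm_le_iff_of_nonempty _).2 fun v => ?_
  rw [Real.norm_eq_abs, Pi.sub_apply]
  calc |(what v : ℝ) - (LmatD d *ᵥ fun u => 2 ^ (-ℓ) * x u) v|
      ≤ |(what v : ℝ) - w v| + |(w v : ℝ) - (LmatD d *ᵥ fun u => 2 ^ (-ℓ) * x u) v| :=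
        abs_sub_le _ _ _
    _ ≤ 2 ^ ((q : ℤ) + 1 - β + 2) / 3 + (7 / 4 * d + 1) := by
        gcongr
        · linarith [htrunc v]
        · exact htransform v
    _ ≤ _ := zfp_error_budget d q β hscale
    _ = _ := by ring

/-- Error of the lossy ZFP fixed-precision compression pipeline against the exact one:
for `x ∈ ℝ^{4^d}`, `x ≠ 0`, with `k`-bit floating-point components,
`e_max = ⌊log₂‖x‖_∞⌋`, `ℓ = e_max − q + 1`, Step 2 truncation `z`, Step 3 lossy
transform `w = 𝐿̃_d(z)`, and Step 8 negabinary truncation `ŵ`, one has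
`‖ŵ − L_d·(2^{−ℓ}·x)‖_∞ ≤ 2^{−ℓ}·((8/3)·ε_β + ε_q·(1+(8/3)·ε_β)·(k_L·(1+ε_q)+1))·‖x‖_∞`
with `ε_m = 2^{1−m}` and `k_L = (7/4)·(2^d − 1)`. -/
theorem zfp_compression_error (d k q β : ℕ) (hd : 1 ≤ d)
    (x : (Fin d → Fin 4) → ℝ) (hx : x ≠ 0)
    (hfloat : ∀ v, ∃ (σ : ℝ) (m : ℕ) (t : ℤ),
      (σ = 1 ∨ σ = -1) ∧ m < 2 ^ k ∧ x v = σ * (m : ℝ) * (2 : ℝ) ^ t)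
    (emax ℓ : ℤ) (hemax : emax = ⌊Real.logb 2 ‖x‖⌋) (hℓ : ℓ = emax - (q : ℤ) + 1)
    (z : (Fin d → Fin 4) → ℤ)
    (hz : ∀ v, z v = (if 0 ≤ x v then 1 else -1) * ⌊(2 : ℝ) ^ (-ℓ) * |x v|⌋)
    (w : (Fin d → Fin 4) → ℤ) (hw : w = LtildeD z)
    (D : (Fin d → Fin 4) → (ℕ →₀ ℤ))
    (hD01 : ∀ v j, D v j = 0 ∨ D v j = 1)
    (hDrep : ∀ v, w v = ∑ j ∈ (D v).support, D v j * (-2 : ℤ) ^ j)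
    (what : (Fin d → Fin 4) → ℤ)
    (hwhat : ∀ v, what v =
      ∑ j ∈ (D v).support.filter (fun j : ℕ => (q : ℤ) + 1 - (β : ℤ) < (j : ℤ)),
        D v j * (-2 : ℤ) ^ j) :
    ‖(fun v => (what v : ℝ)) - (LmatD d).mulVec (fun v => (2 : ℝ) ^ (-ℓ) * x v)‖ ≤
      2 ^ (-ℓ) * ((8 / 3) * 2 ^ (1 - (β : ℤ)) +
        2 ^ (1 - (q : ℤ)) * (1 + (8 / 3) * 2 ^ (1 - (β : ℤ))) *
          ((7 / 4) * ((2 : ℝ) ^ d - 1) * (1 + 2 ^ (1 - (q : ℤ))) + 1)) * ‖x‖ :=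
  zfp_compression_error_general d q β x hx emax ℓ hemax hℓ z hz w hw D hD01 hDrep what hwhat
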